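/- Berge's lemma (used for termination): a matching M in a graph G is maximum if and only if there is no M-augmenting path in G. -/

import Mathlib

open SimpleGraph

variable {V : Type*}

/-- `M` is a matching in the simple graph `G`: a set of edges of `G` that are
pairwise vertex-disjoint. -/
def IsMatchingSet (G : SimpleGraph V) (M : Set (Sym2 V)) : Prop :=
  M ⊆ G.edgeSet ∧ ∀ v : V, {e | e ∈ M ∧ v ∈ e}.Subsingleton

/-- A vertex is free (unmatched) if no matching edge contains it. -/
def Unmatched (M : Set (Sym2 V)) (v : V) : Prop :=
  ∀ e ∈ M, v ∉ e

/-- A walk is alternating w.r.t. `M` if its edges alternate non-matching /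
matching, starting with a non-matching edge. -/
def IsAlternating (G : SimpleGraph V) (M : Set (Sym2 V)) {u v : V} (p : G.Walk u v) : Prop :=
  ∀ (i : ℕ) (h : i < p.edges.length), (p.edges.get ⟨i, h⟩ ∈ M ↔ Odd i)

/-- An `M`-augmenting path: a simple path of odd length, alternating starting
(and hence ending) with non-matching edges, whose two endpoints are free. -/
def IsAugPath (G : SimpleGraph V) (M : Set (Sym2 V)) {u v : V} (p : G.Walk u v) : Prop :=
  p.IsPath ∧ Odd p.length ∧ IsAlternating G M p ∧ Unmatched M u ∧ Unmatched M v

/-- Length of a shortest even-length alternating simple path from a free vertex to `v`. -/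
noncomputable def Lcp (G : SimpleGraph V) (M : Set (Sym2 V)) (v : V) : ℕ∞ :=
  sInf {n : ℕ∞ | ∃ (f : V) (p : G.Walk f v), Unmatched M f ∧ p.IsPath ∧
    IsAlternating G M p ∧ Even p.length ∧ (p.length : ℕ∞) = n}

/-- Length of a shortest odd-length alternating simple path from a free vertex to `v`. -/
noncomputable def LcpOdd (G : SimpleGraph V) (M : Set (Sym2 V)) (v : V) : ℕ∞ :=
  sInf {n : ℕ∞ | ∃ (f : V) (p : G.Walk f v), Unmatched M f ∧ p.IsPath ∧
    IsAlternating G M p ∧ Odd p.length ∧ (p.length : ℕ∞) = n}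

/-!
If `N` is a matching with more edges than `M`, some vertex `v` is covered by `N` but not by `M`.
Take a longest simple path from `v` whose edges alternate between `N \ M` and `M \ N`. By
maximality, its last vertex is free for whichever of `M`, `N` does not contain the last edge.
If the path has odd length it is `M`-augmenting. If it has even length, swapping `N` along it
gives a matching of the same size as `N` that is closer to `M`, and we conclude by induction on
`|M ∆ N|`. Conversely, swapping `M` along an augmenting path produces a larger matching.
-/

open scoped symmDiff

lemma IsMatchingSet.eq_of_mem {G : SimpleGraph V} {K : Set (Sym2 V)} (hK : IsMatchingSet G K)
    {e f : Sym2 V} {x : V} (he : e ∈ K) (hf : f ∈ K) (hxe : x ∈ e) (hxf : x ∈ f) : e = f :=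
  hK.2 x ⟨he, hxe⟩ ⟨hf, hxf⟩

namespace SimpleGraph.Walk

variable {G : SimpleGraph V} {u v w : V}

lemma getVert_mem_getElem_edges (p : G.Walk u w) {i : ℕ} (h : i < p.edges.length) :
    p.getVert i ∈ p.edges[i] ∧ p.getVert (i + 1) ∈ p.edges[i] := by
  simp [getElem_edges]

lemma IsPath.eq_or_succ_eq_of_mem_getElem_edges {p : G.Walk u w} (hp : p.IsPath) {x : V}
    {i j : ℕ} {hi : i < p.edges.length} {hj : j < p.edges.length} (hxi : x ∈ p.edges[i])
    (hxj : x ∈ p.edges[j]) : i = j ∨ i + 1 = j ∨ j + 1 = i := by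
  rw [length_edges] at hi hj
  simp only [getElem_edges, Sym2.mem_iff] at hxi hxj
  have inj := hp.getVert_injOn
  rcases hxi with rfl | rfl <;> rcases hxj with h | h <;>
    have := inj (by simp; omega) (by simp; omega) h <;> omega

lemma IsPath.succ_eq_length_of_end_mem {p : G.Walk u w} (hp : p.IsPath) {i : ℕ}
    {hi : i < p.edges.length} (hw : w ∈ p.edges[i]) : i + 1 = p.length := by
  rw [length_edges] at hi
  simp only [getElem_edges, Sym2.mem_iff] at hw
  rcases hw with h | h
  · have := (hp.getVert_eq_end_iff (by omega)).1 h.symm; omega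
  · exact (hp.getVert_eq_end_iff (by omega)).1 h.symm

-- `IsAlternating` without a prescribed phase: the first edge may or may not lie in `K`.
def AlternatesIn (K : Set (Sym2 V)) (p : G.Walk u w) : Prop :=
  ∀ (i : ℕ) (h : i + 1 < p.edges.length), p.edges[i] ∈ K ↔ p.edges[i + 1] ∉ K

lemma AlternatesIn.of_forall_mem_iff {K K' : Set (Sym2 V)} {p : G.Walk u w}
    (halt : p.AlternatesIn K) (hK' : ∀ e ∈ p.edges, e ∈ K' ↔ e ∉ K) :
    p.AlternatesIn K' := by
  intro i h
  rw [hK' _ (List.getElem_mem _), hK' _ (List.getElem_mem _), halt]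

-- An interior vertex of `p` lies on two consecutive edges of `p`, one of which is in `K`.
lemma AlternatesIn.mem_edges_of_mem_support {K : Set (Sym2 V)} {p : G.Walk u w}
    (halt : p.AlternatesIn K) (hK : IsMatchingSet G K) {e : Sym2 V} (he : e ∈ K) {x : V}
    (hxe : x ∈ e) (hx : x ∈ p.support) (hu : x = u → e ∈ p.edges)
    (hw : x = w → e ∈ p.edges) :
    e ∈ p.edges := by
  obtain ⟨i, rfl, hi⟩ := mem_support_iff_exists_getVert.1 hx
  rcases Nat.eq_zero_or_pos i with rfl | hi0
  · exact hu p.getVert_zero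
  rcases hi.eq_or_lt with rfl | hiL
  · exact hw p.getVert_length
  obtain ⟨j, rfl⟩ : ∃ j, i = j + 1 := ⟨i - 1, by omega⟩
  have hj : j + 1 < p.edges.length := by rw [length_edges]; omega
  have h₁ := (p.getVert_mem_getElem_edges (i := j) (by omega)).2
  have h₂ := (p.getVert_mem_getElem_edges hj).1
  by_cases hj' : p.edges[j] ∈ K
  · exact hK.eq_of_mem he hj' hxe h₁ ▸ List.getElem_mem _
  · exact hK.eq_of_mem he ((halt j hj).not_left.1 hj') hxe h₂ ▸ List.getElem_mem _

lemma exists_forall_not_concat [Fintype V] (P : ∀ w, G.Walk v w → Prop) (hnil : P v nil)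
    (hpath : ∀ w (p : G.Walk v w), P w p → p.IsPath) :
    ∃ w, ∃ p : G.Walk v w, P w p ∧ ∀ z (h : G.Adj w z), ¬P z (p.concat h) := by
  let lengths : Set ℕ := {n | ∃ w, ∃ p : G.Walk v w, P w p ∧ p.length = n}
  have hbdd : BddAbove lengths := ⟨Fintype.card V, by
    rintro _ ⟨w, p, hp, rfl⟩
    exact (hpath w p hp).length_lt.le⟩
  obtain ⟨w, p, hp, hlen⟩ := Nat.sSup_mem (s := lengths) ⟨0, v, nil, hnil, rfl⟩ hbdd
  refine ⟨w, p, hp, fun z h hpz ↦ ?_⟩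
  have := le_csSup hbdd ⟨z, _, hpz, rfl⟩
  rw [length_concat] at this
  omega

lemma AlternatesIn.unmatched_of_forall_not_concat {K K' : Set (Sym2 V)} {p : G.Walk u w}
    (halt : p.AlternatesIn K) (hK : IsMatchingSet G K) (hK' : IsMatchingSet G K')
    (hu : ∀ e ∈ K, u ∈ e → e ∈ p.edges) (hne : ¬p.Nil)
    (hlast : ∀ e ∈ p.edges, w ∈ e → e ∈ K' ∧ e ∉ K)
    (hmax : ∀ z, G.Adj w z → z ∉ p.support → s(w, z) ∈ K → s(w, z) ∉ K' → False) :
    Unmatched K w := by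
  intro e heK hwe
  have he : e ∉ p.edges := fun he ↦ (hlast e he hwe).2 heK
  have heK' : e ∉ K' := fun heK' ↦ he <| by
    have hf := p.mk_penultimate_end_mem_edges hne
    rwa [hK'.eq_of_mem heK' (hlast _ hf (Sym2.mem_mk_right _ _)).1 hwe (Sym2.mem_mk_right _ _)]
  obtain ⟨z, rfl⟩ := Sym2.mem_iff_exists.1 hwe
  have hadj : G.Adj w z := hK.1 heK
  refine hmax z hadj (fun hz ↦ he ?_) heK heK'
  exact halt.mem_edges_of_mem_support hK heK (Sym2.mem_mk_right _ _) hz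
    (fun h ↦ hu _ heK (h ▸ Sym2.mem_mk_right _ _)) (fun h ↦ absurd h hadj.ne')

end SimpleGraph.Walk

section Alternating

open SimpleGraph.Walk

variable {G : SimpleGraph V} {u w : V} {K : Set (Sym2 V)}

lemma isAlternating_iff_getElem {p : G.Walk u w} :
    IsAlternating G K p ↔ ∀ (i : ℕ) (h : i < p.edges.length), p.edges[i] ∈ K ↔ Odd i :=
  Iff.rfl

lemma IsAlternating.alternatesIn {p : G.Walk u w} (halt : IsAlternating G K p) :
    p.AlternatesIn K := by
  rw [isAlternating_iff_getElem] at halt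
  intro i h
  rw [halt, halt, Nat.odd_add_one, not_not]

lemma IsAlternating.getElem_zero_notMem {p : G.Walk u w} (halt : IsAlternating G K p)
    (h : 0 < p.edges.length) : p.edges[0] ∉ K := by
  rw [isAlternating_iff_getElem.1 halt]
  decide

lemma IsAlternating.concat {p : G.Walk u w} (halt : IsAlternating G K p) {z : V}
    (h : G.Adj w z) (hz : s(w, z) ∈ K ↔ Odd p.length) : IsAlternating G K (p.concat h) := by
  rw [isAlternating_iff_getElem] at halt ⊢
  intro i hi
  simp only [edges_concat, List.concat_eq_append, List.length_append, length_edges,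
    List.length_singleton] at hi ⊢
  rcases (Nat.lt_succ_iff.1 hi).lt_or_eq with hi | rfl
  · rw [List.getElem_append_left (by rwa [length_edges]), halt]
  · simpa using hz

lemma isAlternating_cons_iff {v : V} {h : G.Adj u v} {p : G.Walk v w} :
    IsAlternating G K (cons h p) ↔ s(u, v) ∉ K ∧ IsAlternating G Kᶜ p := by
  simp only [isAlternating_iff_getElem, edges_cons, List.length_cons]
  constructor
  · intro halt
    refine ⟨by simpa using halt 0 (by omega), fun i hi ↦ ?_⟩
    rw [Set.mem_compl_iff, ← not_iff_not, not_not, ← Nat.odd_add_one]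
    exact halt (i + 1) (by omega)
  · rintro ⟨h₀, halt⟩ (_ | i) hi
    · simpa using h₀
    · rw [List.getElem_cons_succ, Nat.odd_add_one, ← halt i (by omega), Set.mem_compl_iff,
        not_not]

open scoped Classical in
lemma IsAlternating.countP_mem_edges {p : G.Walk u w} (halt : IsAlternating G K p) :
    p.edges.countP (· ∈ K) = p.length / 2 := by
  induction p generalizing K with
  | nil => simp
  | cons h p ih =>
    obtain ⟨h₀, halt⟩ := isAlternating_cons_iff.1 halt
    have hsum := p.edges.length_eq_countP_add_countP (· ∈ K)
    have hcompl := ih halt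
    simp only [length_edges, decide_eq_true_eq, decide_not, Set.mem_compl_iff] at hsum hcompl
    rw [edges_cons, List.countP_cons_of_neg (by simpa using h₀), length_cons]
    omega

lemma IsMatchingSet.symmDiff_edges (hK : IsMatchingSet G K) {p : G.Walk u w}
    (hp : p.IsPath) (halt : p.AlternatesIn K) (hu : ∀ e ∈ K, u ∈ e → e ∈ p.edges)
    (hw : ∀ e ∈ K, w ∈ e → e ∈ p.edges) :
    IsMatchingSet G (K ∆ {e | e ∈ p.edges}) := by
  have touch {e f : Sym2 V} {x : V} (he : e ∈ K) (hf : f ∈ p.edges) (hxe : x ∈ e)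
      (hxf : x ∈ f) : e ∈ p.edges :=
    halt.mem_edges_of_mem_support hK he hxe (p.mem_support_of_mem_edges hf hxf)
      (fun h ↦ hu e he (h ▸ hxe)) (fun h ↦ hw e he (h ▸ hxe))
  refine ⟨fun e he ↦ ?_, fun x e₁ ⟨he₁, hx₁⟩ e₂ ⟨he₂, hx₂⟩ ↦ ?_⟩
  · rcases he with ⟨he, -⟩ | ⟨he, -⟩
    · exact hK.1 he
    · exact p.edges_subset_edgeSet he
  rcases he₁ with ⟨hK₁, hp₁⟩ | ⟨hp₁, hK₁⟩ <;>
    rcases he₂ with ⟨hK₂, hp₂⟩ | ⟨hp₂, hK₂⟩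
  · exact hK.eq_of_mem hK₁ hK₂ hx₁ hx₂
  · exact absurd (touch hK₁ hp₂ hx₁ hx₂) hp₁
  · exact absurd (touch hK₂ hp₁ hx₂ hx₁) hp₂
  · obtain ⟨i, hi, rfl⟩ := List.getElem_of_mem hp₁
    obtain ⟨j, hj, rfl⟩ := List.getElem_of_mem hp₂
    rcases hp.eq_or_succ_eq_of_mem_getElem_edges hx₁ hx₂ with rfl | rfl | rfl
    · rfl
    · exact absurd ((halt i hj).2 hK₂) hK₁
    · exact absurd ((halt j hi).2 hK₁) hK₂

end Alternating

section Counting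

open SimpleGraph.Walk Finset

variable {G : SimpleGraph V} {u w : V}

lemma Finset.card_symmDiff_add_two_mul_card_inter {α : Type*} [DecidableEq α] (s t : Finset α) :
    #(s ∆ t) + 2 * #(s ∩ t) = #s + #t := by
  rw [symmDiff_eq_sup_sdiff_inf, sup_eq_union, inf_eq_inter,
    card_sdiff_of_subset inter_subset_union, ← card_union_add_card_inter]
  have := card_le_card (inter_subset_union (s := s) (t := t))
  omega

lemma IsAlternating.card_inter_toFinset_edges [DecidableEq (Sym2 V)] {K : Finset (Sym2 V)}
    {p : G.Walk u w} (hp : p.IsPath) (halt : IsAlternating G K p) :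
    #(K ∩ p.edges.toFinset) = p.length / 2 := by
  rw [← halt.countP_mem_edges, List.countP_eq_length_filter,
    ← List.toFinset_card_of_nodup (hp.isTrail.edges_nodup.filter _), List.toFinset_filter]
  congr 1
  ext
  simp [and_comm]

lemma IsMatchingSet.card_biUnion_toFinset [DecidableEq V] {K : Finset (Sym2 V)}
    (hK : IsMatchingSet G K) :
    #(K.biUnion Sym2.toFinset) = 2 * #K := by
  rw [card_biUnion, sum_congr rfl fun e he ↦ Sym2.card_toFinset_of_not_isDiag e
      (G.not_isDiag_of_mem_edgeSet (hK.1 he)), sum_const, smul_eq_mul, mul_comm]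
  intro e he f hf hef
  simp only [Function.onFun, Finset.disjoint_left, Sym2.mem_toFinset]
  exact fun x hxe hxf ↦ hef (hK.eq_of_mem he hf hxe hxf)

lemma exists_unmatched_mem_of_card_lt {M N : Finset (Sym2 V)} (hN : IsMatchingSet G N)
    (hlt : #M < #N) : ∃ v, Unmatched M v ∧ ∃ e ∈ N, v ∈ e := by
  classical
  have hcard : #(M.biUnion Sym2.toFinset) < #(N.biUnion Sym2.toFinset) := calc
    #(M.biUnion Sym2.toFinset) ≤ ∑ e ∈ M, #e.toFinset := card_biUnion_le
    _ ≤ ∑ _e ∈ M, 2 := sum_le_sum fun e _ ↦ by rw [Sym2.card_toFinset]; split_ifs <;> omega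
    _ < #(N.biUnion Sym2.toFinset) := by
      rw [hN.card_biUnion_toFinset, sum_const, smul_eq_mul]; omega
  obtain ⟨v, hvN, hvM⟩ := exists_mem_notMem_of_card_lt_card hcard
  simp only [mem_biUnion, Sym2.mem_toFinset, not_exists, not_and] at hvN hvM
  exact ⟨v, fun e he hve ↦ hvM e he hve, hvN⟩

end Counting

section Augmenting

open SimpleGraph.Walk Finset

variable {G : SimpleGraph V} {u v w : V}

lemma IsAlternating.not_nil_of_forall_not_concat {M N : Set (Sym2 V)} {p : G.Walk v w}
    (halt : IsAlternating G M p) (hN : N ⊆ G.edgeSet) (hvM : Unmatched M v)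
    (hvN : ∃ e ∈ N, v ∈ e)
    (hmax : ∀ z (h : G.Adj w z), z ∉ p.support → (s(w, z) ∈ N ↔ s(w, z) ∉ M) →
      ¬IsAlternating G M (p.concat h)) :
    ¬p.Nil := by
  rintro ⟨⟩
  obtain ⟨e, heN, hve⟩ := hvN
  obtain ⟨z, rfl⟩ := Sym2.mem_iff_exists.1 hve
  have hadj : G.Adj v z := hN heN
  refine hmax z hadj (by simpa using hadj.ne') (iff_of_true heN (hvM _ · hve))
    (halt.concat hadj (iff_of_false (hvM _ · hve) (by simp)))

lemma IsAlternating.isAugPath_or_of_forall_not_concat {M N : Set (Sym2 V)} {p : G.Walk v w}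
    (halt : IsAlternating G M p) (hp : p.IsPath) (hM : IsMatchingSet G M)
    (hN : IsMatchingSet G N) (hNM : ∀ e ∈ p.edges, e ∈ N ↔ e ∉ M) (hvM : Unmatched M v)
    (hvN : ∃ e ∈ N, v ∈ e)
    (hmax : ∀ z (h : G.Adj w z), z ∉ p.support → (s(w, z) ∈ N ↔ s(w, z) ∉ M) →
      ¬IsAlternating G M (p.concat h)) :
    IsAugPath G M p ∨
      (Even p.length ∧ ¬p.Nil ∧ Unmatched N w ∧ ∀ e ∈ N, v ∈ e → e ∈ p.edges) := by
  have hne := halt.not_nil_of_forall_not_concat hN.1 hvM hvN hmax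
  have hlast : ∀ e ∈ p.edges, w ∈ e → (e ∈ M ↔ Even p.length) := by
    intro e he hwe
    obtain ⟨i, hi, rfl⟩ := List.getElem_of_mem he
    rw [← hp.succ_eq_length_of_end_mem hwe, Nat.even_add_one, Nat.not_even_iff_odd]
    exact isAlternating_iff_getElem.1 halt i hi
  rcases Nat.even_or_odd p.length with heven | hodd
  · have h0 : 0 < p.edges.length := by rw [length_edges]; exact not_nil_iff_lt_length.1 hne
    have hv₀ : v ∈ p.edges[0] := by simpa using (p.getVert_mem_getElem_edges h0).1
    have hvN' : ∀ e ∈ N, v ∈ e → e ∈ p.edges := fun e he hve ↦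
      hN.eq_of_mem he ((hNM _ (List.getElem_mem h0)).2 (halt.getElem_zero_notMem h0)) hve hv₀ ▸
        List.getElem_mem h0
    refine .inr ⟨heven, hne, ?_, hvN'⟩
    have hwM : ∀ e ∈ p.edges, w ∈ e → e ∈ M := fun e he hwe ↦ (hlast e he hwe).2 heven
    refine (halt.alternatesIn.of_forall_mem_iff hNM).unmatched_of_forall_not_concat hN hM hvN' hne
      (fun e he hwe ↦ ⟨hwM e he hwe, (hNM e he).not_left.2 (hwM e he hwe)⟩)
      (fun z h hz hzN hzM ↦ hmax z h hz (iff_of_true hzN hzM)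
        (halt.concat h (iff_of_false hzM (Nat.not_odd_iff_even.2 heven))))
  · refine .inl ⟨hp, hodd, halt, hvM, ?_⟩
    refine halt.alternatesIn.unmatched_of_forall_not_concat hM hN
      (fun e he hve ↦ absurd hve (hvM e he)) hne ?_
      (fun z h hz hzM hzN ↦ hmax z h hz (iff_of_false hzN (not_not.2 hzM))
        (halt.concat h (iff_of_true hzM hodd)))
    intro e he hwe
    have heM : e ∉ M := fun heM ↦ Nat.not_even_iff_odd.2 hodd ((hlast e he hwe).1 heM)
    exact ⟨(hNM e he).2 heM, heM⟩

lemma IsAugPath.exists_isMatchingSet_card_eq_succ [DecidableEq (Sym2 V)] {M : Finset (Sym2 V)}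
    (hM : IsMatchingSet G M) {p : G.Walk u w} (haug : IsAugPath G M p) :
    ∃ N : Finset (Sym2 V), IsMatchingSet G N ∧ #N = #M + 1 := by
  obtain ⟨hp, hodd, halt, hu, hw⟩ := haug
  refine ⟨M ∆ p.edges.toFinset, ?_, ?_⟩
  · rw [coe_symmDiff, List.coe_toFinset]
    exact hM.symmDiff_edges hp halt.alternatesIn (fun e he hue ↦ absurd hue (hu e he))
      (fun e he hwe ↦ absurd hwe (hw e he))
  · have := card_symmDiff_add_two_mul_card_inter M p.edges.toFinset
    rw [halt.card_inter_toFinset_edges hp, List.toFinset_card_of_nodup hp.isTrail.edges_nodup,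
      length_edges] at this
    obtain ⟨k, hk⟩ := hodd
    omega

lemma IsAlternating.exists_isMatchingSet_card_eq_card_symmDiff_lt [DecidableEq (Sym2 V)]
    {M N : Finset (Sym2 V)} {p : G.Walk v w} (halt : IsAlternating G M p) (hp : p.IsPath)
    (hN : IsMatchingSet G N) (hNM : ∀ e ∈ p.edges, e ∈ N ↔ e ∉ M) (heven : Even p.length)
    (hne : ¬p.Nil) (hwN : Unmatched N w) (hvN : ∀ e ∈ N, v ∈ e → e ∈ p.edges) :
    ∃ N' : Finset (Sym2 V), IsMatchingSet G N' ∧ #N' = #N ∧ #(M ∆ N') < #(M ∆ N) := by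
  set E := p.edges.toFinset
  have hE : #E = p.length := by
    rw [List.toFinset_card_of_nodup hp.isTrail.edges_nodup, length_edges]
  have hEsub : E ⊆ M ∆ N := fun e he ↦ by
    have := hNM e (List.mem_toFinset.1 he)
    rw [mem_symmDiff]
    tauto
  refine ⟨N ∆ E, ?_, ?_, ?_⟩
  · rw [coe_symmDiff, List.coe_toFinset]
    exact hN.symmDiff_edges hp (halt.alternatesIn.of_forall_mem_iff (by simpa using hNM)) hvN
      fun e he hwe ↦ absurd hwe (hwN e he)
  · have hNE : N ∩ E = E \ M := by
      ext e
      simp only [mem_inter, mem_sdiff, List.mem_toFinset, E]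
      exact ⟨fun ⟨heN, heE⟩ ↦ ⟨heE, (hNM e heE).1 heN⟩,
        fun ⟨heE, heM⟩ ↦ ⟨(hNM e heE).2 heM, heE⟩⟩
    have h₁ := card_symmDiff_add_two_mul_card_inter N E
    have h₂ := card_sdiff_add_card_inter E M
    rw [hNE] at h₁
    rw [inter_comm, halt.card_inter_toFinset_edges hp] at h₂
    obtain ⟨k, hk⟩ := heven
    omega
  · rw [← symmDiff_assoc, symmDiff_of_ge hEsub, card_sdiff_of_subset hEsub]
    have := card_le_card hEsub
    have := not_nil_iff_lt_length.1 hne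
    omega

theorem exists_isAugPath_of_card_lt [Fintype V] {M N : Finset (Sym2 V)} (hM : IsMatchingSet G M)
    (hN : IsMatchingSet G N) (hlt : #M < #N) : ∃ (u w : V) (p : G.Walk u w), IsAugPath G M p := by
  classical
  induction hD : #(M ∆ N) using Nat.strong_induction_on generalizing N with
  | _ n ih =>
  obtain ⟨v, hvM, hvN⟩ := exists_unmatched_mem_of_card_lt hN hlt
  obtain ⟨w, p, ⟨hp, hNM, halt⟩, hmax⟩ := exists_forall_not_concat
    (fun _ p ↦ p.IsPath ∧ (∀ e ∈ p.edges, e ∈ N ↔ e ∉ M) ∧ IsAlternating G M p)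
    ⟨.nil, by simp, by simp [isAlternating_iff_getElem]⟩ fun _ _ h ↦ h.1
  rcases halt.isAugPath_or_of_forall_not_concat hp hM hN hNM hvM hvN
      (fun z h hz hzNM halt' ↦ hmax z h
        ⟨hp.concat hz h, by simpa [or_imp, forall_and] using ⟨hNM, hzNM⟩, halt'⟩)
    with haug | ⟨heven, hne, hwN, hvN'⟩
  · exact ⟨v, w, p, haug⟩
  · obtain ⟨N', hN', hcard, hlt'⟩ :=
      halt.exists_isMatchingSet_card_eq_card_symmDiff_lt hp hN hNM heven hne hwN hvN'
    exact ih _ (hD ▸ hlt') hN' (hcard ▸ hlt) rfl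

end Augmenting

/-- Berge's lemma: a matching `M` in a finite graph `G` is maximum if and
only if there is no `M`-augmenting path in `G`. -/
theorem berge [Fintype V] (G : SimpleGraph V) (M : Finset (Sym2 V))
    (hM : IsMatchingSet G ↑M) :
    (∀ N : Finset (Sym2 V), IsMatchingSet G ↑N → N.card ≤ M.card) ↔
      ¬ ∃ (u v : V) (p : G.Walk u v), IsAugPath G ↑M p := by
  classical
  constructor
  · rintro hmax ⟨u, v, p, haug⟩
    obtain ⟨N, hN, hcard⟩ := haug.exists_isMatchingSet_card_eq_succ hM
    have := hmax N hN
    omega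
  · intro hno N hN
    by_contra! hlt
    exact hno (exists_isAugPath_of_card_lt hM hN hlt)
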